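/- Suppose φ is an analytic self-map of the open unit disk 𝔻 with Denjoy-Wolff point a ∈ ∂𝔻, ψ ∈ H^∞ is continuous at a with ‖ψ‖_∞ = |ψ(a)|, and ρ(W_{ψ,φ}) = |ψ(a)|·ρ(C_φ). If C_φ is normaloid, then W_{ψ,φ} is normaloid. -/

import Mathlib

open Complex Metric Filter Set
open scoped ENNReal NNReal Topology InnerProductSpace

noncomputable section

/-- The open unit disk in ℂ. -/
def unitDisk : Set ℂ := Metric.ball (0 : ℂ) 1

/-- The Hardy space `H²`, modeled by the ℓ² space of Taylor coefficient sequences: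
`f ∈ H²` corresponds to the analytic function `z ↦ ∑ₙ f n * zⁿ` on the disk, and the
`H²` norm is the `ℓ²` norm of the coefficients. -/
abbrev H2 := lp (fun _ : ℕ => ℂ) 2

/-- Evaluation of an element of `H²` (given by its coefficient sequence) at a point. -/
def H2.eval (f : H2) (z : ℂ) : ℂ := ∑' n, f n * z ^ n

/-- `φ` is an analytic self-map of the unit disk. -/
def IsSelfMapOfDisk (φ : ℂ → ℂ) : Prop :=
  DifferentiableOn ℂ φ unitDisk ∧ Set.MapsTo φ unitDisk unitDisk

/-- `ψ ∈ H^∞`: bounded analytic function on the disk. -/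
def MemHinf (ψ : ℂ → ℂ) : Prop :=
  DifferentiableOn ℂ ψ unitDisk ∧ BddAbove ((fun z => ‖ψ z‖) '' unitDisk)

/-- The supremum norm `‖ψ‖_∞` of `ψ` over the disk. -/
def hinfNorm (ψ : ℂ → ℂ) : ℝ := sSup ((fun z => ‖ψ z‖) '' unitDisk)

/-- `W` is the weighted composition operator `W_{ψ,φ}` on `H²`:
`(W f)(z) = ψ(z) * f(φ(z))` for every `f ∈ H²` and `z` in the disk. -/
def IsWCO (ψ φ : ℂ → ℂ) (W : H2 →L[ℂ] H2) : Prop :=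
  ∀ f : H2, ∀ z ∈ unitDisk, H2.eval (W f) z = ψ z * H2.eval f (φ z)

/-- `C` is the composition operator `C_φ` on `H²`: `(C f)(z) = f(φ(z))`. -/
def IsCO (φ : ℂ → ℂ) (C : H2 →L[ℂ] H2) : Prop :=
  ∀ f : H2, ∀ z ∈ unitDisk, H2.eval (C f) z = H2.eval f (φ z)

/-- `a` is the Denjoy–Wolff point of `φ`: `a` lies in the closed disk and the iterates
of `φ` converge to `a` uniformly on compact subsets of the open disk. -/
def IsDenjoyWolff (φ : ℂ → ℂ) (a : ℂ) : Prop :=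
  a ∈ closure unitDisk ∧
    ∀ K : Set ℂ, K ⊆ unitDisk → IsCompact K →
      TendstoUniformlyOn (fun n => φ^[n]) (fun _ => a) atTop K

/-- A bounded operator is normaloid if its norm equals its spectral radius. -/
def IsNormaloid (T : H2 →L[ℂ] H2) : Prop :=
  spectralRadius ℂ T = (‖T‖₊ : ℝ≥0∞)

/-- The reproducing kernel of `H²` at `a`: `K_a(z) = 1/(1 - conj(a)·z)`. -/
def hardyKernel (a z : ℂ) : ℂ := 1 / (1 - (starRingEnd ℂ) a * z)

/-!
Since `‖ψ‖_∞ = |ψ(a)|` and `W = T_ψ C_φ`, we get `‖W‖ ≤ |ψ(a)| ‖C‖ = |ψ(a)| ρ(C) = ρ(W) ≤ ‖W‖`.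

The only analytic input is the multiplier bound `‖ψ g‖ ≤ ‖ψ‖_∞ ‖g‖` on `H²`. On a circle of
radius `r < 1`, the Taylor coefficients of `g(r ·)` are the Fourier coefficients of its
restriction, so `‖g(r ·)‖` is an `L²` norm over the circle, which is monotone in the pointwise
modulus; letting `r → 1` gives the bound for `g` itself.
-/

open MeasureTheory AddCircle

-- Gives `NormOneClass (H2 →L[ℂ] H2)`, which `spectrum.spectralRadius_le_nnnorm` needs.
instance lp.instNontrivial {ι : Type*} [Nonempty ι] {E : ι → Type*}
    [∀ i, NormedAddCommGroup (E i)] [∀ i, Nontrivial (E i)] {p : ℝ≥0∞} :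
    Nontrivial (lp E p) := by
  classical
  obtain ⟨i⟩ := ‹Nonempty ι›
  obtain ⟨x, hx⟩ := exists_ne (0 : E i)
  exact ⟨⟨lp.single p i x, 0, fun h => hx (by simpa using congr_arg (fun f : lp E p => f i) h)⟩⟩

theorem ContinuousMap.norm_toLp_le_mul_norm_toLp {X E F 𝕜 : Type*} [MeasurableSpace X]
    [TopologicalSpace X] [BorelSpace X] [CompactSpace X] [NormedField 𝕜]
    [NormedAddCommGroup E] [NormedSpace 𝕜 E] [NormedAddCommGroup F] [NormedSpace 𝕜 F]
    [SecondCountableTopologyEither X E] [SecondCountableTopologyEither X F]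
    {p : ℝ≥0∞} [Fact (1 ≤ p)] (μ : Measure X) [IsFiniteMeasure μ] {f : C(X, E)} {g : C(X, F)}
    {c : ℝ} (h : ∀ x, ‖f x‖ ≤ c * ‖g x‖) :
    ‖toLp p μ 𝕜 f‖ ≤ c * ‖toLp p μ 𝕜 g‖ := by
  refine Lp.norm_le_mul_norm_of_ae_le_mul ?_
  filter_upwards [coeFn_toLp (p := p) (𝕜 := 𝕜) μ f, coeFn_toLp (p := p) (𝕜 := 𝕜) μ g]
    with x hfx hgx
  rw [hfx, hgx]
  exact h x

section FourierSeries

variable {T : ℝ} [Fact (0 < T)]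

theorem summable_smul_fourier {c : ℕ → ℂ} (hc : Summable fun n => ‖c n‖) :
    Summable fun n : ℕ => c n • fourier (T := T) n :=
  .of_norm (by simpa [norm_smul, fourier_norm] using hc)

theorem tsum_smul_fourier_apply {c : ℕ → ℂ} (hc : Summable fun n => ‖c n‖) (t : AddCircle T) :
    (∑' n : ℕ, c n • fourier (T := T) n) t = ∑' n : ℕ, c n * toCircle t ^ n := by
  rw [← ContinuousMap.evalCLM_apply ℂ t, ContinuousLinearMap.map_tsum _ (summable_smul_fourier hc)]
  simp [toCircle_nsmul]

theorem norm_toLp_tsum_smul_fourier (c : lp (fun _ : ℕ => ℂ) 2) (hc : Summable fun n => ‖c n‖) :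
    ‖ContinuousMap.toLp 2 haarAddCircle ℂ (∑' n : ℕ, c n • fourier (T := T) n)‖ = ‖c‖ := by
  have hV := ((orthonormal_fourier (T := T)).comp _ Nat.cast_injective).orthogonalFamily
  have hsum : HasSum (fun n : ℕ => c n • fourierLp (T := T) 2 n)
      (ContinuousMap.toLp 2 haarAddCircle ℂ (∑' n : ℕ, c n • fourier (T := T) n)) := by
    simpa using (summable_smul_fourier hc).hasSum.mapL (ContinuousMap.toLp 2 haarAddCircle ℂ)
  rw [hsum.unique (hV.hasSum_linearIsometry c), LinearIsometry.norm_map]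

end FourierSeries

theorem norm_coe_lt_one_of_ball (r : ball (0 : ℝ) 1) : ‖(r : ℝ)‖ < 1 :=
  mem_ball_zero_iff.mp r.2

theorem norm_mul_pow_le_of_ball (x : ℂ) (r : ball (0 : ℝ) 1) (n : ℕ) :
    ‖x * (r : ℝ) ^ n‖ ≤ ‖x‖ := by
  rw [norm_mul, norm_pow, Complex.norm_real]
  exact mul_le_of_le_one_right (norm_nonneg _)
    (pow_le_one₀ (norm_nonneg _) (norm_coe_lt_one_of_ball r).le)

theorem ofReal_mul_toCircle_mem_unitDisk (r : ball (0 : ℝ) 1) (t : UnitAddCircle) :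
    ((r : ℝ) : ℂ) * toCircle t ∈ unitDisk := by
  simpa [unitDisk, norm_mul, Circle.norm_coe] using norm_coe_lt_one_of_ball r

namespace H2

def dilate (f : H2) (r : ball (0 : ℝ) 1) : H2 :=
  ⟨fun n => f n * (r : ℝ) ^ n, (lp.memℓp f).mono' fun n => norm_mul_pow_le_of_ball (f n) r n⟩

variable (f : H2) (r : ball (0 : ℝ) 1)

@[simp]
theorem dilate_apply (n : ℕ) : dilate f r n = f n * (r : ℝ) ^ n := rfl

theorem norm_dilate_le : ‖dilate f r‖ ≤ ‖f‖ :=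
  lp.norm_mono two_ne_zero fun n => norm_mul_pow_le_of_ball (f n) r n

theorem summable_norm_dilate : Summable fun n => ‖dilate f r n‖ := by
  refine .of_nonneg_of_le (fun n => norm_nonneg _) (fun n => ?_)
    ((summable_geometric_of_lt_one (norm_nonneg _) (norm_coe_lt_one_of_ball r)).mul_left ‖f‖)
  rw [dilate_apply, norm_mul, norm_pow, Complex.norm_real]
  gcongr
  exact lp.norm_apply_le_norm two_ne_zero f n

theorem tsum_dilate_smul_fourier_apply (t : UnitAddCircle) :
    (∑' n : ℕ, dilate f r n • fourier (T := 1) n) t = eval f ((r : ℝ) * toCircle t) := by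
  rw [tsum_smul_fourier_apply (summable_norm_dilate f r)]
  simp only [dilate_apply, eval, mul_pow, mul_assoc]

theorem norm_le_mul_norm_of_eval_eq_mul {ψ : ℂ → ℂ} {M : ℝ}
    (hψ : ∀ z ∈ unitDisk, ‖ψ z‖ ≤ M) {g h : H2}
    (hgh : ∀ z ∈ unitDisk, eval h z = ψ z * eval g z) : ‖h‖ ≤ M * ‖g‖ := by
  have hM : 0 ≤ M := (norm_nonneg _).trans (hψ 0 (mem_ball_self one_pos))
  have hdilate (r : ball (0 : ℝ) 1) : ‖dilate h r‖ ≤ M * ‖g‖ := by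
    set Φ := ContinuousMap.toLp (E := ℂ) 2 (haarAddCircle (T := 1)) ℂ
    calc ‖dilate h r‖ = ‖Φ (∑' n : ℕ, dilate h r n • fourier n)‖ :=
          (norm_toLp_tsum_smul_fourier _ (summable_norm_dilate h r)).symm
      _ ≤ M * ‖Φ (∑' n : ℕ, dilate g r n • fourier n)‖ := by
          refine ContinuousMap.norm_toLp_le_mul_norm_toLp _ fun t => ?_
          have ht := ofReal_mul_toCircle_mem_unitDisk r t
          rw [tsum_dilate_smul_fourier_apply, tsum_dilate_smul_fourier_apply, hgh _ ht, norm_mul]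
          gcongr
          exact hψ _ ht
      _ = M * ‖dilate g r‖ := by rw [norm_toLp_tsum_smul_fourier _ (summable_norm_dilate g r)]
      _ ≤ M * ‖g‖ := by gcongr; exact norm_dilate_le g r
  have : (comap ((↑) : ball (0 : ℝ) 1 → ℝ) (𝓝 1)).NeBot :=
    mem_closure_iff_comap_neBot.mp (by simp [closure_ball])
  refine lp.norm_le_of_tendsto (l := comap ((↑) : ball (0 : ℝ) 1 → ℝ) (𝓝 1))
    (.of_forall hdilate) (tendsto_pi_nhds.mpr fun n => ?_)
  have hcont : Continuous fun x : ℝ => h n * (x : ℂ) ^ n := by fun_prop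
  exact (hcont.tendsto' 1 (h n) (by simp)).comp tendsto_comap

end H2

theorem norm_le_hinfNorm {ψ : ℂ → ℂ} (hψ : MemHinf ψ) {z : ℂ} (hz : z ∈ unitDisk) :
    ‖ψ z‖ ≤ hinfNorm ψ :=
  le_csSup hψ.2 ⟨z, hz, rfl⟩

theorem IsWCO.norm_le {ψ φ : ℂ → ℂ} {W C : H2 →L[ℂ] H2} (hW : IsWCO ψ φ W) (hC : IsCO φ C)
    (hψ : MemHinf ψ) : ‖W‖ ≤ hinfNorm ψ * ‖C‖ := by
  have hψ0 : 0 ≤ hinfNorm ψ :=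
    (norm_nonneg _).trans (norm_le_hinfNorm hψ (mem_ball_self one_pos))
  refine W.opNorm_le_bound (by positivity) fun f => ?_
  calc ‖W f‖ ≤ hinfNorm ψ * ‖C f‖ :=
        H2.norm_le_mul_norm_of_eval_eq_mul (fun z hz => norm_le_hinfNorm hψ hz)
          fun z hz => by rw [hW f z hz, hC f z hz]
    _ ≤ hinfNorm ψ * (‖C‖ * ‖f‖) := by gcongr; exact C.le_opNorm f
    _ = hinfNorm ψ * ‖C‖ * ‖f‖ := by ring

theorem statement13_general (φ ψ : ℂ → ℂ) (a : ℂ)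
    (hψ : MemHinf ψ)
    (hψa : hinfNorm ψ = ‖ψ a‖)
    (C : H2 →L[ℂ] H2) (hC : IsCO φ C)
    (W : H2 →L[ℂ] H2) (hW : IsWCO ψ φ W)
    (hρ : spectralRadius ℂ W = (‖ψ a‖₊ : ℝ≥0∞) * spectralRadius ℂ C)
    (hCn : IsNormaloid C) :
    IsNormaloid W := by
  have hWC : ‖W‖₊ ≤ ‖ψ a‖₊ * ‖C‖₊ := by
    rw [← NNReal.coe_le_coe, NNReal.coe_mul, coe_nnnorm, coe_nnnorm, coe_nnnorm, ← hψa]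
    exact hW.norm_le hC hψ
  refine le_antisymm (spectrum.spectralRadius_le_nnnorm W) ?_
  rw [hρ, hCn, ← ENNReal.coe_mul]
  exact ENNReal.coe_le_coe.mpr hWC

/-- Suppose `φ` is an analytic self-map of the disk with Denjoy–Wolff
point `a ∈ ∂𝔻`, `ψ ∈ H^∞` is continuous at `a` with `‖ψ‖_∞ = |ψ(a)|`, and
`ρ(W_{ψ,φ}) = |ψ(a)|·ρ(C_φ)`. If `C_φ` is normaloid, then `W_{ψ,φ}` is normaloid. -/
theorem statement13 (φ ψ : ℂ → ℂ) (a : ℂ)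
    (hφ : IsSelfMapOfDisk φ) (ha : IsDenjoyWolff φ a) (haB : ‖a‖ = 1)
    (hψ : MemHinf ψ) (hψc : ContinuousWithinAt ψ (insert a unitDisk) a)
    (hψa : hinfNorm ψ = ‖ψ a‖)
    (C : H2 →L[ℂ] H2) (hC : IsCO φ C)
    (W : H2 →L[ℂ] H2) (hW : IsWCO ψ φ W)
    (hρ : spectralRadius ℂ W = (‖ψ a‖₊ : ℝ≥0∞) * spectralRadius ℂ C)
    (hCn : IsNormaloid C) :
    IsNormaloid W :=
  statement13_general φ ψ a hψ hψa C hC W hW hρ hCn
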